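/- Let G be a graph with two vertex-disjoint subgraphs H and H' whose union is G and with no edges between them. If both H and H' admit equitable proper m-colorings, then G admits an equitable proper m-coloring. (One sorts the color classes of H in nonincreasing order of size, the color classes of H' in nondecreasing order of size, and matches them up.) -/

import Mathlib

/-!
Relabel the colors of `H` so that its class sizes are nondecreasing in the color, and those of
`H'` so that its class sizes are nonincreasing. For colors `i ≤ j` the class of `i` in `G` then
exceeds that of `j` by at most the (at most one) excess of `H'`, and for `i ≥ j` by at most the
excess of `H`.
-/

open Finset

section Equitable

variable {γ κ : Type*} [Fintype γ] [DecidableEq κ]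

def IsEquitable (f : γ → κ) : Prop :=
  ∀ i j, (univ.filter fun v => f v = i).card ≤ (univ.filter fun v => f v = j).card + 1

theorem card_filter_equiv_comp_eq {κ' : Type*} [DecidableEq κ'] (e : κ ≃ κ') (f : γ → κ)
    (k : κ') :
    (univ.filter fun v => e (f v) = k).card = (univ.filter fun v => f v = e.symm k).card := by
  simp only [← e.eq_symm_apply]

theorem card_filter_sumElim_eq {δ : Type*} [Fintype δ] (g : γ → κ) (g' : δ → κ) (k : κ) :
    (univ.filter fun v => Sum.elim g g' v = k).card
      = (univ.filter fun a => g a = k).card + (univ.filter fun b => g' b = k).card := by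
  simp only [card_filter, Fintype.sum_sum_type]
  rfl

end Equitable

theorem add_le_add_add_one_of_monotone_of_antitone {ι : Type*} [LinearOrder ι] {a b : ι → ℕ}
    (ha : Monotone a) (hb : Antitone b) (ha' : ∀ i j, a i ≤ a j + 1)
    (hb' : ∀ i j, b i ≤ b j + 1) (i j : ι) : a i + b i ≤ a j + b j + 1 := by
  rcases le_total i j with hij | hji
  · have := ha hij
    have := hb' i j
    omega
  · have := hb hji
    have := ha' i j
    omega

theorem exists_perm_isEquitable_sumElim {α β : Type*} [Fintype α] [Fintype β] {m : ℕ}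
    {f : α → Fin m} {f' : β → Fin m} (hf : IsEquitable f) (hf' : IsEquitable f') :
    ∃ σ ρ : Equiv.Perm (Fin m), IsEquitable (Sum.elim (σ ∘ f) (ρ ∘ f')) := by
  set a : Fin m → ℕ := fun i => (univ.filter fun v => f v = i).card
  set b : Fin m → ℕ := fun i => (univ.filter fun v => f' v = i).card
  set σ : Equiv.Perm (Fin m) := Tuple.sort a
  set ρ : Equiv.Perm (Fin m) := Fin.revPerm.trans (Tuple.sort b)
  have hσ : Monotone (a ∘ σ) := Tuple.monotone_sort a
  have hρ : Antitone (b ∘ ρ) := fun i j hij => Tuple.monotone_sort b (Fin.rev_le_rev.mpr hij)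
  have hcard : ∀ k, (univ.filter fun v => Sum.elim (σ.symm ∘ f) (ρ.symm ∘ f') v = k).card
      = a (σ k) + b (ρ k) := by
    intro k
    rw [card_filter_sumElim_eq]
    exact congrArg₂ (· + ·) (card_filter_equiv_comp_eq σ.symm f k)
      (card_filter_equiv_comp_eq ρ.symm f' k)
  refine ⟨σ.symm, ρ.symm, fun i j => ?_⟩
  rw [hcard i, hcard j]
  exact add_le_add_add_one_of_monotone_of_antitone hσ hρ
    (fun i j => hf (σ i) (σ j)) (fun i j => hf' (ρ i) (ρ j)) i j

theorem equitable_coloring_of_disjoint_union_general {α β : Type*} [Fintype α] [Fintype β]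
    (G : SimpleGraph (α ⊕ β)) (hsep : ∀ (a : α) (b : β), ¬ G.Adj (Sum.inl a) (Sum.inr b))
    (m : ℕ)
    (hH : ∃ f : α → Fin m,
      (∀ u v : α, G.Adj (Sum.inl u) (Sum.inl v) → f u ≠ f v) ∧
      (∀ i j : Fin m,
        (univ.filter fun v => f v = i).card ≤ (univ.filter fun v => f v = j).card + 1))
    (hH' : ∃ f : β → Fin m,
      (∀ u v : β, G.Adj (Sum.inr u) (Sum.inr v) → f u ≠ f v) ∧
      (∀ i j : Fin m,
        (univ.filter fun v => f v = i).card ≤ (univ.filter fun v => f v = j).card + 1)) :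
    ∃ f : α ⊕ β → Fin m,
      (∀ u v, G.Adj u v → f u ≠ f v) ∧
      (∀ i j : Fin m,
        (univ.filter fun v => f v = i).card ≤ (univ.filter fun v => f v = j).card + 1) := by
  obtain ⟨f, hf_proper, hf_equitable⟩ := hH
  obtain ⟨f', hf'_proper, hf'_equitable⟩ := hH'
  obtain ⟨σ, ρ, h_equitable⟩ := exists_perm_isEquitable_sumElim hf_equitable hf'_equitable
  refine ⟨Sum.elim (σ ∘ f) (ρ ∘ f'), ?_, h_equitable⟩
  rintro (u | u) (v | v) huv
  · exact σ.injective.ne (hf_proper u v huv)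
  · exact absurd huv (hsep u v)
  · exact absurd huv.symm (hsep v u)
  · exact ρ.injective.ne (hf'_proper u v huv)

/-- If `G` is the disjoint union of `H` and `H'` (vertex set `α ⊕ β`, no edges
between the two sides), and both restrictions admit equitable proper `m`-colorings, then so
does `G`. -/
theorem equitable_coloring_of_disjoint_union {α β : Type*} [Fintype α] [Fintype β]
    [DecidableEq α] [DecidableEq β]
    (G : SimpleGraph (α ⊕ β)) (hsep : ∀ (a : α) (b : β), ¬ G.Adj (Sum.inl a) (Sum.inr b))
    (m : ℕ)
    (hH : ∃ f : α → Fin m,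
      (∀ u v : α, G.Adj (Sum.inl u) (Sum.inl v) → f u ≠ f v) ∧
      (∀ i j : Fin m,
        (univ.filter fun v => f v = i).card ≤ (univ.filter fun v => f v = j).card + 1))
    (hH' : ∃ f : β → Fin m,
      (∀ u v : β, G.Adj (Sum.inr u) (Sum.inr v) → f u ≠ f v) ∧
      (∀ i j : Fin m,
        (univ.filter fun v => f v = i).card ≤ (univ.filter fun v => f v = j).card + 1)) :
    ∃ f : α ⊕ β → Fin m,
      (∀ u v, G.Adj u v → f u ≠ f v) ∧
      (∀ i j : Fin m,
        (univ.filter fun v => f v = i).card ≤ (univ.filter fun v => f v = j).card + 1) :=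
  equitable_coloring_of_disjoint_union_general G hsep m hH hH'
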